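/- arXiv:2102.07364 — 3 statements merged into one kernel-verified Lean document; each statement's English description precedes it below -/
import Mathlib

section
/- (Maurey's empirical method) For the l1 ball B₁ᵈ(r) = {x ∈ ℝᵈ : ‖x‖₁ ≤ r} and any δ > 0, the logarithm of the δ-covering number of B₁ᵈ(r) in the Euclidean (l2) norm is at most (r²/δ²)·log(2d+1). -/
noncomputable def coveringNumber {α : Type*} [PseudoMetricSpace α] (δ : ℝ) (T : Set α) : ℕ∞ :=
  ⨅ (S : Finset α) (_ : ↑S ⊆ T ∧ ∀ x ∈ T, ∃ y ∈ S, dist x y ≤ δ), (S.card : ℕ∞)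

/-- The `l1` ball of radius `r` inside `ℝᵈ`, viewed with its Euclidean (`l2`) metric. -/
def l1Ball (d : ℕ) (r : ℝ) : Set (EuclideanSpace ℝ (Fin d)) := {x | ∑ i, |x i| ≤ r}

/-!
Every `x` in the `ℓ¹` ball of radius `r` is a convex combination `∑ pᵢ zᵢ` of the `2d + 1`
points `0, ±r eⱼ`. If `Z₁, …, Z_t` are independent draws from `p`, the empirical mean
`(1/t) ∑ Zₖ` has mean square distance `(∑ pᵢ ‖zᵢ‖² - ‖x‖²) / t ≤ (r² - ‖x‖²) / t` from `x`;
choosing the draws one at a time, each no worse than the average, makes this deterministic.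
With `t = ⌊r²/δ²⌋` the bound is below `δ²` as soon as `‖x‖ > δ`, and otherwise `0` is
within `δ`. So the at most `(2d + 1)^t` empirical means form a `δ`-net, and `t ≤ r²/δ²`.
-/

open Finset

section EmpiricalApproximation

variable {E ι : Type*} [NormedAddCommGroup E] [InnerProductSpace ℝ E] [Fintype ι]

lemma exists_le_of_sum_mul_le {p g : ι → ℝ} (hp₀ : ∀ i, 0 ≤ p i) (hp₁ : ∑ i, p i = 1) {B : ℝ}
    (h : ∑ i, p i * g i ≤ B) : ∃ i, g i ≤ B := by
  have hne : (univ : Finset ι).Nonempty := nonempty_of_sum_ne_zero (hp₁ ▸ one_ne_zero)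
  obtain ⟨i, -, hi⟩ := exists_mem_eq_inf' hne g
  have hinf := inf_le_centerMass (f := g) (fun i _ => hp₀ i) (hp₁ ▸ zero_lt_one)
  simp only [centerMass, hp₁, inv_one, one_mul, smul_eq_mul] at hinf
  exact ⟨i, hi ▸ hinf.trans h⟩

lemma norm_sum_smul_le {p : ι → ℝ} (hp₀ : ∀ i, 0 ≤ p i) (hp₁ : ∑ i, p i = 1) {z : ι → E}
    {R : ℝ} (hz : ∀ i, ‖z i‖ ≤ R) : ‖∑ i, p i • z i‖ ≤ R := by
  simpa using (convex_closedBall (0 : E) R).sum_mem (fun i _ => hp₀ i) hp₁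
    fun i _ => mem_closedBall_zero_iff.2 (hz i)

lemma sum_mul_norm_add_sub_sq {p : ι → ℝ} (hp₁ : ∑ i, p i = 1) (z : ι → E) (u : E) :
    ∑ i, p i * ‖u + (z i - ∑ j, p j • z j)‖ ^ 2 =
      ‖u‖ ^ 2 + ∑ i, p i * ‖z i‖ ^ 2 - ‖∑ i, p i • z i‖ ^ 2 := by
  set x := ∑ i, p i • z i
  have hmean : ∑ i, p i * inner ℝ (u - x) (z i) = inner ℝ (u - x) x := by
    simp only [x, inner_sum, real_inner_smul_right]
  calc ∑ i, p i * ‖u + (z i - x)‖ ^ 2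
      = ∑ i, p i * (‖u - x‖ ^ 2 + 2 * inner ℝ (u - x) (z i) + ‖z i‖ ^ 2) := by
        refine sum_congr rfl fun i _ => ?_
        rw [← norm_add_sq_real]
        congr 3
        abel
    _ = ‖u - x‖ ^ 2 + 2 * inner ℝ (u - x) x + ∑ i, p i * ‖z i‖ ^ 2 := by
        simp only [mul_add, sum_add_distrib, ← sum_mul, hp₁, ← hmean, mul_sum]
        ring_nf
    _ = ‖u‖ ^ 2 + ∑ i, p i * ‖z i‖ ^ 2 - ‖x‖ ^ 2 := by
        rw [norm_sub_sq_real, inner_sub_left, real_inner_self_eq_norm_sq]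
        ring

theorem exists_norm_sum_sub_smul_sq_le {p : ι → ℝ} (hp₀ : ∀ i, 0 ≤ p i) (hp₁ : ∑ i, p i = 1)
    {z : ι → E} {R : ℝ} (hz : ∀ i, ‖z i‖ ≤ R) (t : ℕ) :
    ∃ f : Fin t → ι, ‖∑ k, z (f k) - (t : ℝ) • ∑ i, p i • z i‖ ^ 2 ≤
      t * (R ^ 2 - ‖∑ i, p i • z i‖ ^ 2) := by
  set x := ∑ i, p i • z i
  induction t with
  | zero => exact ⟨Fin.elim0, by simp⟩
  | succ t ih =>
    obtain ⟨f, hf⟩ := ih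
    set u := ∑ k, z (f k) - (t : ℝ) • x
    have hsecond : ∑ i, p i * ‖z i‖ ^ 2 ≤ R ^ 2 :=
      calc ∑ i, p i * ‖z i‖ ^ 2 ≤ ∑ i, p i * R ^ 2 := sum_le_sum fun i _ =>
            mul_le_mul_of_nonneg_left (pow_le_pow_left₀ (norm_nonneg _) (hz i) 2) (hp₀ i)
        _ = R ^ 2 := by rw [← sum_mul, hp₁, one_mul]
    have havg : ∑ i, p i * ‖u + (z i - x)‖ ^ 2 ≤ (t + 1) * (R ^ 2 - ‖x‖ ^ 2) := by
      rw [sum_mul_norm_add_sub_sq hp₁]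
      linarith
    obtain ⟨i, hi⟩ := exists_le_of_sum_mul_le hp₀ hp₁ havg
    refine ⟨Fin.snoc (α := fun _ => ι) f i, ?_⟩
    have hstep : ∑ k, z (Fin.snoc (α := fun _ => ι) f i k) - ((t + 1 : ℕ) : ℝ) • x =
        u + (z i - x) := by
      simp only [Fin.sum_univ_castSucc, Fin.snoc_castSucc, Fin.snoc_last, u]
      push_cast
      module
    rw [hstep]
    exact_mod_cast hi

variable [DecidableEq E]

noncomputable def empiricalNet (z : ι → E) (t : ℕ) : Finset E :=
  univ.image fun f : Fin t → ι => (t : ℝ)⁻¹ • ∑ k, z (f k)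

lemma card_empiricalNet_le (z : ι → E) (t : ℕ) : #(empiricalNet z t) ≤ Fintype.card ι ^ t :=
  card_image_le.trans (by simp)

lemma zero_mem_empiricalNet {z : ι → E} {i₀ : ι} (h : z i₀ = 0) (t : ℕ) :
    0 ∈ empiricalNet z t :=
  mem_image.2 ⟨fun _ => i₀, mem_univ _, by simp [h]⟩

lemma coe_empiricalNet_subset {z : ι → E} {C : Set E} (hC : Convex ℝ C) (h₀ : 0 ∈ C)
    (hz : ∀ i, z i ∈ C) (t : ℕ) : ↑(empiricalNet z t) ⊆ C := by
  rintro _ hy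
  obtain ⟨f, -, rfl⟩ := mem_image.1 (mem_coe.1 hy)
  rcases t.eq_zero_or_pos with rfl | ht
  · simpa using h₀
  · rw [smul_sum]
    refine hC.sum_mem (fun _ _ => by positivity) ?_ fun k _ => hz (f k)
    simp [ht.ne']

theorem exists_mem_empiricalNet_mul_norm_sub_sq_le {p : ι → ℝ} (hp₀ : ∀ i, 0 ≤ p i)
    (hp₁ : ∑ i, p i = 1) {z : ι → E} {R : ℝ} (hz : ∀ i, ‖z i‖ ≤ R) {t : ℕ} (ht : 0 < t) :
    ∃ y ∈ empiricalNet z t, t * ‖∑ i, p i • z i - y‖ ^ 2 ≤ R ^ 2 - ‖∑ i, p i • z i‖ ^ 2 := by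
  set x := ∑ i, p i • z i
  obtain ⟨f, hf⟩ := exists_norm_sum_sub_smul_sq_le hp₀ hp₁ hz t
  set y := (t : ℝ)⁻¹ • ∑ k, z (f k)
  have ht' : (0 : ℝ) < t := Nat.cast_pos.2 ht
  have hscale : ∑ k, z (f k) - (t : ℝ) • x = (t : ℝ) • (y - x) := by
    simp [y, smul_sub, smul_smul, ht'.ne']
  rw [hscale, norm_smul, mul_pow, Real.norm_of_nonneg ht'.le, norm_sub_rev, sq] at hf
  exact ⟨y, mem_image.2 ⟨f, mem_univ _, rfl⟩, le_of_mul_le_mul_left (by linarith) ht'⟩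

end EmpiricalApproximation

section L1Ball

variable {d : ℕ} {r : ℝ}

noncomputable def l1BallVertex (r : ℝ) : Option (Fin d ⊕ Fin d) → EuclideanSpace ℝ (Fin d)
  | none => 0
  | some (.inl j) => EuclideanSpace.single j r
  | some (.inr j) => EuclideanSpace.single j (-r)

lemma norm_l1BallVertex_le (hr : 0 ≤ r) (i : Option (Fin d ⊕ Fin d)) :
    ‖l1BallVertex r i‖ ≤ r := by
  rcases i with _ | j | j <;> simp [l1BallVertex, abs_of_nonneg hr, hr]

lemma l1BallVertex_mem_l1Ball (hr : 0 ≤ r) (i : Option (Fin d ⊕ Fin d)) :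
    l1BallVertex r i ∈ l1Ball d r := by
  rcases i with _ | j | j <;>
    simp [l1Ball, l1BallVertex, PiLp.single_apply, apply_ite abs, abs_of_nonneg hr, hr]

lemma convex_l1Ball : Convex ℝ (l1Ball d r) := by
  intro x hx y hy a b ha hb hab
  calc ∑ i, |(a • x + b • y) i| ≤ ∑ i, (a * |x i| + b * |y i|) := sum_le_sum fun i _ => by
        simpa [abs_of_nonneg ha, abs_of_nonneg hb] using abs_add_le (a * x i) (b * y i)
    _ = a * ∑ i, |x i| + b * ∑ i, |y i| := by rw [sum_add_distrib, mul_sum, mul_sum]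
    _ ≤ a * r + b * r := by gcongr; exacts [hx, hy]
    _ = r := by rw [← add_mul, hab, one_mul]

/-- The weights are `(xⱼ)⁺ / r` on `r eⱼ`, `(xⱼ)⁻ / r` on `-r eⱼ`, and the rest on `0`. -/
lemma exists_sum_smul_l1BallVertex (hr : 0 < r) {x : EuclideanSpace ℝ (Fin d)}
    (hx : x ∈ l1Ball d r) :
    ∃ p : Option (Fin d ⊕ Fin d) → ℝ, (∀ i, 0 ≤ p i) ∧ ∑ i, p i = 1 ∧
      ∑ i, p i • l1BallVertex r i = x := by
  let p : Option (Fin d ⊕ Fin d) → ℝ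
    | none => 1 - (∑ j, |x j|) / r
    | some (.inl j) => (x j)⁺ / r
    | some (.inr j) => (x j)⁻ / r
  refine ⟨p, ?_, ?_, ?_⟩
  · rintro (_ | j | j)
    · simpa [p, sub_nonneg, div_le_one hr, l1Ball] using hx
    all_goals exact div_nonneg (by simp) hr.le
  · simp [p, Fintype.sum_option, Fintype.sum_sum_type, ← sum_add_distrib, ← add_div,
      posPart_add_negPart, ← sum_div]
  · ext j
    simp [p, l1BallVertex, Fintype.sum_option, Fintype.sum_sum_type, Pi.single_apply]
    field_simp
    rw [← sub_eq_add_neg, posPart_sub_negPart]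

open scoped Classical in
lemma exists_mem_empiricalNet_dist_le (hr : 0 < r) {δ : ℝ} (hδ : 0 < δ) {t : ℕ}
    (hrt : r ^ 2 < (t + 1) * δ ^ 2) {x : EuclideanSpace ℝ (Fin d)} (hx : x ∈ l1Ball d r) :
    ∃ y ∈ empiricalNet (l1BallVertex r) t, dist x y ≤ δ := by
  obtain ⟨p, hp₀, hp₁, rfl⟩ := exists_sum_smul_l1BallVertex hr hx
  set x := ∑ i, p i • l1BallVertex r i
  have hxr : ‖x‖ ≤ r := norm_sum_smul_le hp₀ hp₁ (norm_l1BallVertex_le hr.le)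
  by_cases hxδ : ‖x‖ ≤ δ
  · exact ⟨0, zero_mem_empiricalNet (i₀ := none) rfl t, by rwa [dist_zero_right]⟩
  · have ht : 0 < t := by
      by_contra! h
      simp only [Nat.le_zero.1 h, Nat.cast_zero, zero_add, one_mul] at hrt
      nlinarith
    obtain ⟨y, hy, hxy⟩ :=
      exists_mem_empiricalNet_mul_norm_sub_sq_le hp₀ hp₁ (norm_l1BallVertex_le hr.le) ht
    have hsq : (t : ℝ) * ‖x - y‖ ^ 2 ≤ t * δ ^ 2 := by nlinarith
    refine ⟨y, hy, ?_⟩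
    rw [dist_eq_norm]
    exact (abs_le_of_sq_le_sq' (le_of_mul_le_mul_left hsq (by positivity)) hδ.le).2

open scoped Classical in
theorem coveringNumber_l1Ball_le (d : ℕ) {r δ : ℝ} (hr : 0 < r) (hδ : 0 < δ) :
    coveringNumber δ (l1Ball d r) ≤ ((2 * d + 1) ^ ⌊r ^ 2 / δ ^ 2⌋₊ : ℕ) := by
  set t := ⌊r ^ 2 / δ ^ 2⌋₊
  have hrt : r ^ 2 < (t + 1) * δ ^ 2 := by
    have := Nat.lt_floor_add_one (r ^ 2 / δ ^ 2)
    rwa [div_lt_iff₀ (by positivity)] at this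
  set S := empiricalNet (l1BallVertex (d := d) r) t
  have hcard : #S ≤ (2 * d + 1) ^ t := by
    simpa [Fintype.card_option, Fintype.card_sum, two_mul]
      using card_empiricalNet_le (l1BallVertex (d := d) r) t
  calc coveringNumber δ (l1Ball d r) ≤ #S :=
        iInf₂_le S ⟨coe_empiricalNet_subset convex_l1Ball (by simp [l1Ball, hr.le])
          (l1BallVertex_mem_l1Ball hr.le) t,
          fun _ hx => exists_mem_empiricalNet_dist_le hr hδ hrt hx⟩
    _ ≤ ((2 * d + 1) ^ t : ℕ) := by exact_mod_cast hcard

end L1Ball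

lemma Real.log_natCast_le_log_natCast {m n : ℕ} (h : m ≤ n) : Real.log m ≤ Real.log n := by
  rcases m.eq_zero_or_pos with rfl | hm
  · simpa using Real.log_natCast_nonneg n
  · exact Real.log_le_log (by exact_mod_cast hm) (by exact_mod_cast h)

/-- Maurey's empirical method: `log N(δ, B₁ᵈ(r), ‖·‖₂) ≤ (r²/δ²)·log(2d+1)`. -/
theorem maurey_covering_l1_ball (d : ℕ) (r δ : ℝ) (hr : 0 < r) (hδ : 0 < δ) :
    coveringNumber δ (l1Ball d r) ≠ ⊤ ∧
      Real.log ((coveringNumber δ (l1Ball d r)).toNat) ≤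
        r ^ 2 / δ ^ 2 * Real.log (2 * d + 1) := by
  have hN := coveringNumber_l1Ball_le d hr hδ
  refine ⟨ne_top_of_le_ne_top (ENat.natCast_ne_top _) hN, ?_⟩
  have hlog : 0 ≤ Real.log (2 * d + 1) := Real.log_nonneg (by linarith [d.cast_nonneg (α := ℝ)])
  calc Real.log ((coveringNumber δ (l1Ball d r)).toNat)
      ≤ Real.log ((2 * d + 1) ^ ⌊r ^ 2 / δ ^ 2⌋₊ : ℕ) :=
        Real.log_natCast_le_log_natCast (ENat.toNat_le_of_le_natCast hN)
    _ = ⌊r ^ 2 / δ ^ 2⌋₊ * Real.log (2 * d + 1) := by push_cast; rw [Real.log_pow]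
    _ ≤ r ^ 2 / δ ^ 2 * Real.log (2 * d + 1) :=
        mul_le_mul_of_nonneg_right (Nat.floor_le (by positivity)) hlog
end

section
/- Fix x ∈ ℝᵈ with ‖x‖₁ ≤ r and let Z be the random vector taking value sgn(xᵢ)·r·eᵢ with probability |xᵢ|/r for each i, and 0 with probability 1 − ‖x‖₁/r. Then E[Z] = x and, for the average Z̄ of t independent copies of Z, E[‖Z̄ − x‖₂²] ≤ r²/t. -/
/-!
Coordinatewise, `Z̄ − x` is the centred average of `t` independent copies of `Zⱼ`, so
`E‖Z̄ − x‖² = (1/t) Σⱼ Var Zⱼ ≤ (1/t) E‖Z‖²`. Every atom of `Z` other than `0` has norm at most `r`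
and carries mass `|xᵢ|/r`, hence `E‖Z‖² ≤ r‖x‖₁ ≤ r²`.
-/

open MeasureTheory ProbabilityTheory

namespace Real

theorem abs_mul_sign (a : ℝ) : |a| * sign a = a := by
  rcases lt_trichotomy a 0 with h | rfl | h
  · rw [sign_of_neg h, abs_of_neg h]; ring
  · simp
  · rw [sign_of_pos h, abs_of_pos h, mul_one]

theorem abs_sign_le_one (a : ℝ) : |sign a| ≤ 1 := by
  rcases sign_apply_eq a with h | h | h <;> simp [h]

end Real

section EmpiricalMean

variable {ι Ω : Type*} [Fintype ι] {mΩ : MeasurableSpace Ω} {P : Measure Ω}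

theorem variance_inv_card_mul_sum {κ : Type*} [Fintype κ] {X : κ → Ω → ℝ}
    (hX : ∀ i, MemLp (X i) 2 P) (hind : Pairwise fun i j ↦ X i ⟂ᵢ[P] X j) {v : ℝ}
    (hv : ∀ i, Var[X i; P] = v) :
    Var[fun ω ↦ (Fintype.card κ : ℝ)⁻¹ * ∑ i, X i ω; P] = v / Fintype.card κ := by
  have h_sum : Var[∑ i, X i; P] = Fintype.card κ * v := by
    rw [IndepFun.variance_sum (fun i _ ↦ hX i) fun i _ j _ hij ↦ hind hij]
    simp [hv]
  rw [variance_const_mul, ← Finset.sum_fn, h_sum]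
  rcases eq_or_ne (Fintype.card κ : ℝ) 0 with h | h
  · simp [h]
  · field_simp

theorem integral_norm_sub_integral_sq [IsFiniteMeasure P] {Y : Ω → EuclideanSpace ℝ ι}
    (hY : MemLp Y 2 P) :
    ∫ ω, ‖Y ω - ∫ ω', Y ω' ∂P‖ ^ 2 ∂P = ∑ k, Var[fun ω ↦ Y ω k; P] := by
  have hY_coord (k : ι) : MemLp (fun ω ↦ Y ω k) 2 P :=
    (EuclideanSpace.proj (𝕜 := ℝ) k).comp_memLp' hY
  have h_integral_coord (k : ι) : (∫ ω, Y ω ∂P) k = ∫ ω, Y ω k ∂P :=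
    ((EuclideanSpace.proj (𝕜 := ℝ) k).integral_comp_comm (hY.integrable one_le_two)).symm
  simp_rw [EuclideanSpace.real_norm_sq_eq, PiLp.sub_apply, h_integral_coord]
  rw [integral_finsetSum _ fun k _ ↦ ?_]
  · exact Finset.sum_congr rfl fun k _ ↦ (variance_eq_integral (hY_coord k).aemeasurable).symm
  · exact ((hY_coord k).sub (memLp_const _)).integrable_sq

theorem integral_norm_inv_card_smul_sum_sub_sq [IsFiniteMeasure P] {κ : Type*} [Fintype κ]
    [Nonempty κ] {μ : Measure (EuclideanSpace ℝ ι)} (hμ : MemLp id 2 μ)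
    {Y : κ → Ω → EuclideanSpace ℝ ι} (hY : ∀ i, AEMeasurable (Y i) P)
    (hind : Pairwise fun i j ↦ Y i ⟂ᵢ[P] Y j) (hlaw : ∀ i, P.map (Y i) = μ) :
    ∫ ω, ‖(Fintype.card κ : ℝ)⁻¹ • ∑ i, Y i ω - ∫ z, z ∂μ‖ ^ 2 ∂P =
      (∑ k, Var[fun z ↦ z k; μ]) / Fintype.card κ := by
  have hY_memLp (i : κ) : MemLp (Y i) 2 P :=
    (memLp_map_measure_iff aestronglyMeasurable_id (hY i)).1 (hlaw i ▸ hμ)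
  have hY_mean (i : κ) : ∫ ω, Y i ω ∂P = ∫ z, z ∂μ := by
    rw [← hlaw i]
    exact (integral_map (hY i) aestronglyMeasurable_id).symm
  have h_coord (k : ι) : Measurable fun z : EuclideanSpace ℝ ι ↦ z k := by fun_prop
  have h_mean : ∫ ω, (Fintype.card κ : ℝ)⁻¹ • ∑ i, Y i ω ∂P = ∫ z, z ∂μ := by
    rw [integral_smul, integral_finsetSum _ fun i _ ↦ (hY_memLp i).integrable one_le_two]
    simp only [hY_mean, Finset.sum_const, Finset.card_univ, ← Nat.cast_smul_eq_nsmul ℝ, smul_smul]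
    rw [inv_mul_cancel₀ (by positivity), one_smul]
  have h_memLp : MemLp (fun ω ↦ (Fintype.card κ : ℝ)⁻¹ • ∑ i, Y i ω) 2 P :=
    (memLp_finsetSum _ fun i _ ↦ hY_memLp i).const_smul (Fintype.card κ : ℝ)⁻¹
  rw [← h_mean, integral_norm_sub_integral_sq h_memLp, Finset.sum_div]
  refine Finset.sum_congr rfl fun k _ ↦ ?_
  simp only [PiLp.smul_apply, WithLp.ofLp_sum, Finset.sum_apply, smul_eq_mul]
  refine variance_inv_card_mul_sum (fun i ↦ ?_)
    (fun i j hij ↦ (hind hij).comp (h_coord k) (h_coord k)) fun i ↦ ?_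
  · exact (EuclideanSpace.proj (𝕜 := ℝ) k).comp_memLp' (hY_memLp i)
  · rw [← hlaw i, variance_map (h_coord k).aemeasurable (hY i)]

theorem sum_variance_apply_le_integral_norm_sq {μ : Measure (EuclideanSpace ℝ ι)}
    [IsProbabilityMeasure μ] (hμ : MemLp id 2 μ) :
    ∑ k, Var[fun z ↦ z k; μ] ≤ ∫ z, ‖z‖ ^ 2 ∂μ := by
  have h_coord (k : ι) : MemLp (fun z : EuclideanSpace ℝ ι ↦ z k) 2 μ :=
    (EuclideanSpace.proj (𝕜 := ℝ) k).comp_memLp' hμ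
  simp_rw [EuclideanSpace.real_norm_sq_eq]
  rw [integral_finsetSum _ fun k _ ↦ (h_coord k).integrable_sq]
  exact Finset.sum_le_sum fun k _ ↦ variance_le_expectation_sq (h_coord k).aestronglyMeasurable

end EmpiricalMean

theorem integrable_ofReal_smul_dirac {α F : Type*} [MeasurableSpace α]
    [MeasurableSingletonClass α] [NormedAddCommGroup F] (f : α → F) (c : ℝ) (a : α) :
    Integrable f (ENNReal.ofReal c • Measure.dirac a) :=
  (integrable_dirac enorm_lt_top).smul_measure ENNReal.ofReal_ne_top

section MaureyMeasure

variable {ι : Type*} [Fintype ι] [DecidableEq ι]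

noncomputable def maureyMeasure (x : EuclideanSpace ℝ ι) (r : ℝ) :
    Measure (EuclideanSpace ℝ ι) :=
  (∑ i, ENNReal.ofReal (|x i| / r) •
      Measure.dirac (EuclideanSpace.single i (Real.sign (x i) * r))) +
    ENNReal.ofReal (1 - (∑ i, |x i|) / r) • Measure.dirac 0

theorem integrable_maureyMeasure {F : Type*} [NormedAddCommGroup F] (x : EuclideanSpace ℝ ι)
    (r : ℝ) (f : EuclideanSpace ℝ ι → F) : Integrable f (maureyMeasure x r) :=
  (integrable_finsetSum_measure.2 fun _ _ ↦ integrable_ofReal_smul_dirac f _ _).add_measure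
    (integrable_ofReal_smul_dirac f _ _)

theorem integral_maureyMeasure {F : Type*} [NormedAddCommGroup F] [NormedSpace ℝ F]
    [CompleteSpace F] {x : EuclideanSpace ℝ ι} {r : ℝ} (hr : 0 ≤ r) {f : EuclideanSpace ℝ ι → F}
    (hf : f 0 = 0) :
    ∫ z, f z ∂maureyMeasure x r =
      ∑ i, (|x i| / r) • f (EuclideanSpace.single i (Real.sign (x i) * r)) := by
  rw [maureyMeasure, integral_add_measure
      (integrable_finsetSum_measure.2 fun _ _ ↦ integrable_ofReal_smul_dirac f _ _)
      (integrable_ofReal_smul_dirac f _ _),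
    integral_finsetSum_measure fun _ _ ↦ integrable_ofReal_smul_dirac f _ _]
  simp only [integral_smul_measure, integral_dirac, hf, smul_zero, add_zero]
  refine Finset.sum_congr rfl fun i _ ↦ ?_
  rw [ENNReal.toReal_ofReal (by positivity)]

theorem integral_id_maureyMeasure (x : EuclideanSpace ℝ ι) {r : ℝ} (hr : 0 < r) :
    ∫ z, z ∂maureyMeasure x r = x := by
  rw [integral_maureyMeasure hr.le rfl]
  ext k
  simp only [WithLp.ofLp_sum, WithLp.ofLp_smul, PiLp.ofLp_single, Finset.sum_apply,
    Pi.smul_apply, Pi.single_apply, smul_eq_mul, mul_ite, mul_zero, Finset.sum_ite_eq,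
    Finset.mem_univ, ↓reduceIte]
  field_simp
  exact Real.abs_mul_sign _

theorem integral_norm_sq_maureyMeasure_le {x : EuclideanSpace ℝ ι} {r : ℝ} (hr : 0 < r)
    (hx : ∑ i, |x i| ≤ r) :
    ∫ z, ‖z‖ ^ 2 ∂maureyMeasure x r ≤ r ^ 2 := by
  rw [integral_maureyMeasure hr.le (by simp)]
  calc ∑ i, (|x i| / r) • ‖EuclideanSpace.single i (Real.sign (x i) * r)‖ ^ 2
      ≤ ∑ i, |x i| / r * r ^ 2 := by
        refine Finset.sum_le_sum fun i _ ↦ mul_le_mul_of_nonneg_left ?_ (by positivity)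
        rw [PiLp.norm_single, norm_mul, Real.norm_eq_abs, Real.norm_of_nonneg hr.le]
        gcongr
        exact mul_le_of_le_one_left hr.le (Real.abs_sign_le_one _)
    _ = (∑ i, |x i|) * r := by
        rw [Finset.sum_mul]
        refine Finset.sum_congr rfl fun i _ ↦ ?_
        field_simp
    _ ≤ r ^ 2 := by
        rw [sq]
        exact mul_le_mul_of_nonneg_right hx hr.le

end MaureyMeasure

/-- The Maurey random vector: `Z = sgn(xᵢ)·r·eᵢ` with probability `|xᵢ|/r`, and `0` with
probability `1 − ‖x‖₁/r`. Then `E[Z] = x`, and the average `Z̄` of `t` i.i.d. copies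
satisfies `E[‖Z̄ − x‖₂²] ≤ r²/t`. -/
theorem maurey_random_vector {d : ℕ} (x : EuclideanSpace ℝ (Fin d)) (r : ℝ) (hr : 0 < r)
    (hx : ∑ i, |x i| ≤ r)
    (μ : Measure (EuclideanSpace ℝ (Fin d)))
    (hμ : μ = (∑ i, ENNReal.ofReal (|x i| / r) •
          Measure.dirac (EuclideanSpace.single i (Real.sign (x i) * r))) +
        ENNReal.ofReal (1 - (∑ i, |x i|) / r) • Measure.dirac 0) :
    (∫ z, z ∂μ) = x ∧
      ∀ (Ω : Type) (_ : MeasurableSpace Ω) (P : Measure Ω), IsProbabilityMeasure P →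
        ∀ (t : ℕ), 0 < t →
          ∀ Z : Fin t → Ω → EuclideanSpace ℝ (Fin d),
            (∀ i, Measurable (Z i)) →
            iIndepFun Z P →
            (∀ i, Measure.map (Z i) P = μ) →
            ∫ ω, ‖(t : ℝ)⁻¹ • (∑ i, Z i ω) - x‖ ^ 2 ∂P ≤ r ^ 2 / t := by
  obtain rfl : μ = maureyMeasure x r := hμ
  refine ⟨integral_id_maureyMeasure x hr, fun Ω _ P _ t ht Z hZ hind hlaw ↦ ?_⟩
  have : Nonempty (Fin t) := ⟨⟨0, ht⟩⟩
  have : IsProbabilityMeasure (maureyMeasure x r) :=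
    hlaw ⟨0, ht⟩ ▸ Measure.isProbabilityMeasure_map (hZ _).aemeasurable
  have h_memLp : MemLp id 2 (maureyMeasure x r) :=
    (memLp_two_iff_integrable_sq_norm aestronglyMeasurable_id).2 (integrable_maureyMeasure x r _)
  have h_average := integral_norm_inv_card_smul_sum_sub_sq h_memLp (fun i ↦ (hZ i).aemeasurable)
    (fun _ _ hij ↦ hind.indepFun hij) hlaw
  rw [Fintype.card_fin, integral_id_maureyMeasure x hr] at h_average
  rw [h_average]
  gcongr
  exact (sum_variance_apply_le_integral_norm_sq h_memLp).trans
    (integral_norm_sq_maureyMeasure_le hr hx)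
end

section
/- (Set-Restricted Eigenvalue Condition error bound) Let S ⊆ ℝⁿ and suppose A ∈ ℝ^{m×n} satisfies S-REC(S, γ, δ'), i.e. ‖A(x₁−x₂)‖₂ ≥ γ‖x₁−x₂‖₂ − δ' for all x₁, x₂ ∈ S, with γ > 0. Let x ∈ ℝⁿ, let x̄ ∈ S minimize ‖x − s‖₂ over s ∈ S, and let x̃ ∈ S minimize ‖Ax − As‖₂ over s ∈ S. If additionally ‖A(x − x̄)‖₂ ≤ 2‖x − x̄‖₂, then ‖x − x̃‖₂ ≤ (1 + 4/γ)·‖x − x̄‖₂ + δ'/γ. -/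
section

variable {E F : Type*} [SeminormedAddCommGroup E] [SeminormedAddCommGroup F]

theorem norm_sub_le_two_mul_of_norm_sub_le {a b c : F} (h : ‖b - a‖ ≤ ‖b - c‖) :
    ‖c - a‖ ≤ 2 * ‖b - c‖ :=
  calc ‖c - a‖ ≤ ‖c - b‖ + ‖b - a‖ := norm_sub_le_norm_sub_add_norm_sub c b a
    _ ≤ 2 * ‖b - c‖ := by rw [norm_sub_rev c b]; linarith

theorem norm_sub_le_of_srec (A : E → F) {S : Set E} {γ δ : ℝ} (hγ : 0 < γ)
    (hS : ∀ x₁ ∈ S, ∀ x₂ ∈ S, γ * ‖x₁ - x₂‖ - δ ≤ ‖A (x₁ - x₂)‖)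
    {x₁ x₂ : E} (h₁ : x₁ ∈ S) (h₂ : x₂ ∈ S) :
    ‖x₁ - x₂‖ ≤ (‖A (x₁ - x₂)‖ + δ) / γ := by
  rw [le_div_iff₀ hγ]
  linarith [hS x₁ h₁ x₂ h₂]

end

/-- S-REC error bound: if `A` satisfies `S-REC(S, γ, δ')`, `xbar` minimizes the true error over
`S`, `xtil` minimizes the measurement error over `S`, and `‖A(x−xbar)‖ ≤ 2‖x−xbar‖`, then
`‖x−xtil‖ ≤ (1 + 4/γ)‖x−xbar‖ + δ'/γ`. -/
theorem srec_error_bound {m n : ℕ}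
    (A : EuclideanSpace ℝ (Fin n) →ₗ[ℝ] EuclideanSpace ℝ (Fin m))
    (S : Set (EuclideanSpace ℝ (Fin n))) (γ δ' : ℝ) (hγ : 0 < γ)
    (hSREC : ∀ x₁ ∈ S, ∀ x₂ ∈ S, γ * ‖x₁ - x₂‖ - δ' ≤ ‖A (x₁ - x₂)‖)
    (x xbar xtil : EuclideanSpace ℝ (Fin n))
    (hxbar : xbar ∈ S ∧ ∀ s ∈ S, ‖x - xbar‖ ≤ ‖x - s‖)
    (hxtil : xtil ∈ S ∧ ∀ s ∈ S, ‖A x - A xtil‖ ≤ ‖A x - A s‖)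
    (hAx : ‖A (x - xbar)‖ ≤ 2 * ‖x - xbar‖) :
    ‖x - xtil‖ ≤ (1 + 4 / γ) * ‖x - xbar‖ + δ' / γ := by
  obtain ⟨hxbarS, -⟩ := hxbar
  obtain ⟨hxtilS, hxtil_min⟩ := hxtil
  have hmeas : ‖A (xbar - xtil)‖ ≤ 4 * ‖x - xbar‖ := by
    rw [map_sub]
    calc ‖A xbar - A xtil‖ ≤ 2 * ‖A x - A xbar‖ :=
          norm_sub_le_two_mul_of_norm_sub_le (hxtil_min xbar hxbarS)
      _ ≤ 4 * ‖x - xbar‖ := by rw [← map_sub]; linarith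
  calc ‖x - xtil‖ ≤ ‖x - xbar‖ + ‖xbar - xtil‖ := norm_sub_le_norm_sub_add_norm_sub _ _ _
    _ ≤ ‖x - xbar‖ + (4 * ‖x - xbar‖ + δ') / γ := by
        grw [norm_sub_le_of_srec A hγ hSREC hxbarS hxtilS, hmeas]
    _ = (1 + 4 / γ) * ‖x - xbar‖ + δ' / γ := by field_simp; ring
end
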